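/- Let ψ, φ : ℝ² → ℝ be Schwartz functions and set u = ∇^⊥ψ. Then the commutator representation of the SQG nonlinear flux holds: 2 ∫_{ℝ²} (Λψ)(x) (u(x)·∇φ(x)) dx = ∫_{ℝ²} ψ(x) [ Λ(∇φ·u)(x) − ∇φ(x)·(∇^⊥Λψ)(x) ] dx, i.e. (θ R^⊥θ, ∇φ)_{L²} = ½ ∫ (Λ^{−1}θ) [Λ, ∇φ]·R^⊥θ dx with θ = Λψ. -/

import Mathlib

open MeasureTheory Filter Topology Real Set
open scoped RealInnerProductSpace
noncomputable section

/-- The plane, with its Euclidean structure. -/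
abbrev E2 : Type := EuclideanSpace ℝ (Fin 2)

/-- Partial derivative `∂ᵢ g` at `x`. -/
def pd (i : Fin 2) (g : E2 → ℝ) (x : E2) : ℝ := fderiv ℝ g x (EuclideanSpace.single i 1)

/-- Laplacian `Δ g` at `x`. -/
def lap (g : E2 → ℝ) (x : E2) : ℝ := ∑ i : Fin 2, pd i (pd i g) x

/-- Perpendicular gradient `∇^⊥ψ = (−∂₂ψ, ∂₁ψ)`. -/
def gradPerp (ψ : E2 → ℝ) (x : E2) : Fin 2 → ℝ := ![-(pd 1 ψ x), pd 0 ψ x]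

/-- The Fourier transform `ĝ(ξ) = ∫ e^{−i x·ξ} g(x) dx` of `g : ℝ² → ℝ`. -/
def ft (g : E2 → ℝ) (ξ : E2) : ℂ :=
  ∫ x : E2, Complex.exp (-Complex.I * ((⟪x, ξ⟫ : ℝ) : ℂ)) * (g x : ℂ)

/-- `L` is the half-Laplacian `Λ = (−Δ)^{1/2}` of `g`, defined on the Fourier side by
`Λg(x) = (2π)^{−2} ∫ e^{i x·ξ} |ξ| ĝ(ξ) dξ`. -/
def IsFourierHalfLap (g L : E2 → ℝ) : Prop :=
  ∀ x : E2, (L x : ℂ)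
    = ((((2 * π)^2)⁻¹ : ℝ) : ℂ)
        * ∫ ξ : E2, Complex.exp (Complex.I * ((⟪x, ξ⟫ : ℝ) : ℂ)) * (‖ξ‖ : ℂ) * ft g ξ

/-!
Write `w = ∇φ · ∇^⊥ψ = u · ∇φ`. Since `Λ` is symmetric, `∫ ψ Λw = ∫ w Λψ`. Integrating by parts
twice, `∫ ψ ∇φ · ∇^⊥Λψ = -∫ (∇φ · ∇^⊥ψ) Λψ`: the mixed second derivatives of `φ` cancel. So the
right-hand side is `2 ∫ w Λψ`, which is the left-hand side.

Both properties of `Λ` are read off on the Fourier side, where `Λψ` is the inverse Fourier transform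
of `2π ‖η‖ 𝓕ψ(η)`: this is integrable even after multiplication by `‖η‖`, so `Λψ` is bounded and
differentiable with bounded derivative, which justifies the integrations by parts; and the
symmetry of `Λ` comes from the evenness of `‖η‖`.
-/

open scoped FourierTransform LineDeriv SchwartzMap

lemma fderiv_fderiv_apply_comm {E F : Type*} [NormedAddCommGroup E] [NormedSpace ℝ E]
    [NormedAddCommGroup F] [NormedSpace ℝ F] {f : E → F} (hf : ContDiff ℝ 2 f) (x v w : E) :
    fderiv ℝ (fun y => fderiv ℝ f y w) x v = fderiv ℝ (fun y => fderiv ℝ f y v) x w := by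
  have hdiff : Differentiable ℝ (fderiv ℝ f) :=
    (hf.fderiv_right (m := 1) (by norm_num)).differentiable (by norm_num)
  rw [fderiv_clm_apply hdiff.differentiableAt (differentiableAt_const w),
    fderiv_clm_apply hdiff.differentiableAt (differentiableAt_const v)]
  simpa using (hf.contDiffAt.isSymmSndFDerivAt (by simp)).eq v w

namespace SchwartzMap

variable {E : Type*} [NormedAddCommGroup E] [NormedSpace ℝ E]

lemma lineDerivOp_mul (f g : 𝓢(E, ℝ)) (v x : E) :
    ∂_{v} (pairing (.mul ℝ ℝ) f g) x = ∂_{v} f x * g x + f x * ∂_{v} g x := by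
  simp only [lineDerivOp_apply_eq_fderiv, pairing_apply, ContinuousLinearMap.mul_apply']
  rw [fderiv_fun_mul f.differentiableAt g.differentiableAt]
  simp only [add_apply, smul_apply, smul_eq_mul]
  ring

lemma lineDerivOp_mul_lineDerivOp_sub (f g : 𝓢(E, ℝ)) (v w x : E) :
    ∂_{v} (pairing (.mul ℝ ℝ) f (∂_{w} g)) x - ∂_{w} (pairing (.mul ℝ ℝ) f (∂_{v} g)) x
      = ∂_{v} f x * ∂_{w} g x - ∂_{w} f x * ∂_{v} g x := by
  have hsymm : ∂_{v} (∂_{w} g) x = ∂_{w} (∂_{v} g) x :=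
    fderiv_fderiv_apply_comm (g.smooth 2) x v w
  rw [lineDerivOp_mul, lineDerivOp_mul, hsymm]
  ring

end SchwartzMap

section FourierInv

variable {V : Type*} [NormedAddCommGroup V] [InnerProductSpace ℝ V] [FiniteDimensional ℝ V]
  [MeasurableSpace V] [BorelSpace V]

lemma integral_fourierInv_mul_eq_of_integrable {g K : V → ℂ} (hg : Integrable g)
    (hK : Integrable K) : ∫ x, 𝓕⁻ K x * g x = ∫ η, K η * 𝓕⁻ g η := by
  have hflip : (-innerₗ V).flip = -innerₗ V := by
    ext v w
    simp [real_inner_comm]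
  have hcont : Continuous fun p : V × V => (-innerₗ V) p.1 p.2 := by
    simpa using (continuous_fst.inner continuous_snd).fun_neg
  have := VectorFourier.integral_bilin_fourierIntegral_eq_flip
    (ContinuousLinearMap.mul ℂ ℂ) Real.continuous_fourierChar hcont hK hg
  rw [hflip] at this
  exact this

variable {K : V → ℂ} {L : V → ℝ}

lemma norm_le_integral_norm_of_ofReal_eq_fourierInv (hL : ∀ x, (L x : ℂ) = 𝓕⁻ K x) (x : V) :
    ‖L x‖ ≤ ∫ η, ‖K η‖ := by
  rw [← Complex.norm_real, hL]
  exact VectorFourier.norm_fourierIntegral_le_integral_norm _ _ _ _ _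

lemma hasFDerivAt_of_ofReal_eq_fourierInv (hL : ∀ x, (L x : ℂ) = 𝓕⁻ K x) (hK : Integrable K)
    (hK₁ : Integrable fun η => ‖η‖ * ‖K η‖) (x : V) :
    HasFDerivAt L
      (Complex.reCLM ∘L 𝓕⁻ (VectorFourier.fourierSMulRight (-innerSL ℝ) K) x) x := by
  have hL' : L = fun y => (𝓕⁻ K y).re := funext fun y => by rw [← hL, Complex.ofReal_re]
  rw [hL']
  exact Complex.reCLM.hasFDerivAt.comp x
    (VectorFourier.hasFDerivAt_fourierIntegral (-innerSL ℝ) hK (by simpa using hK₁) x)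

lemma norm_fderiv_le_of_ofReal_eq_fourierInv (hL : ∀ x, (L x : ℂ) = 𝓕⁻ K x) (hK : Integrable K)
    (hK₁ : Integrable fun η => ‖η‖ * ‖K η‖) (x : V) :
    ‖fderiv ℝ L x‖ ≤ ∫ η, ‖VectorFourier.fourierSMulRight (-innerSL ℝ) K η‖ := by
  rw [(hasFDerivAt_of_ofReal_eq_fourierInv hL hK hK₁ x).fderiv]
  calc _ ≤ ‖Complex.reCLM‖ * ‖𝓕⁻ (VectorFourier.fourierSMulRight (-innerSL ℝ) K) x‖ :=
        ContinuousLinearMap.opNorm_comp_le _ _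
    _ ≤ _ := by
        rw [Complex.reCLM_norm, one_mul]
        exact VectorFourier.norm_fourierIntegral_le_integral_norm _ _ _ _ _

end FourierInv

section HalfLaplacian

variable {V : Type*} [NormedAddCommGroup V] [InnerProductSpace ℝ V] [FiniteDimensional ℝ V]
  [MeasurableSpace V] [BorelSpace V]

/-- The symbol `|ξ| ĝ(ξ)` of `Λ g`, in Mathlib's normalisation `𝓕 g (η) = ∫ e^{-2πi⟪x, η⟫} g x`
of the Fourier transform, where it becomes `2π ‖η‖ 𝓕 g (η)`. -/
def halfLapSymbol (g : V → ℝ) (η : V) : ℂ :=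
  ((2 * π * ‖η‖ : ℝ) : ℂ) * 𝓕 (fun x => (g x : ℂ)) η

def IsHalfLap (g L : V → ℝ) : Prop :=
  ∀ x, (L x : ℂ) = 𝓕⁻ (halfLapSymbol g) x

lemma SchwartzMap.fourier_ofReal (g : 𝓢(V, ℝ)) :
    𝓕 (fun x => (g x : ℂ)) = ⇑(𝓕 (g.postcompCLM Complex.ofRealCLM) : 𝓢(V, ℂ)) := rfl

lemma norm_halfLapSymbol (g : V → ℝ) (η : V) :
    ‖halfLapSymbol g η‖ = 2 * π * (‖η‖ * ‖𝓕 (fun x => (g x : ℂ)) η‖) := by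
  rw [halfLapSymbol, norm_mul, Complex.norm_real, Real.norm_of_nonneg (by positivity)]
  ring

lemma integrable_halfLapSymbol (g : 𝓢(V, ℝ)) : Integrable (halfLapSymbol g) := by
  have hmom := (𝓕 (g.postcompCLM Complex.ofRealCLM) : 𝓢(V, ℂ)).integrable_pow_mul volume 1
  rw [← g.fourier_ofReal] at hmom
  refine (hmom.const_mul (2 * π)).mono' ?_ (ae_of_all _ fun η => ?_)
  · unfold halfLapSymbol
    rw [g.fourier_ofReal]
    fun_prop
  · rw [norm_halfLapSymbol, pow_one]

lemma integrable_norm_mul_halfLapSymbol (g : 𝓢(V, ℝ)) :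
    Integrable fun η => ‖η‖ * ‖halfLapSymbol g η‖ := by
  have hmom := (𝓕 (g.postcompCLM Complex.ofRealCLM) : 𝓢(V, ℂ)).integrable_pow_mul volume 2
  rw [← g.fourier_ofReal] at hmom
  refine (hmom.const_mul (2 * π)).congr (ae_of_all _ fun η => ?_)
  simp only [norm_halfLapSymbol]
  ring

namespace IsHalfLap

variable {f g : 𝓢(V, ℝ)} {L : V → ℝ}

lemma exists_bound (hL : IsHalfLap f L) : ∃ C, ∀ x, ‖L x‖ ≤ C :=
  ⟨_, norm_le_integral_norm_of_ofReal_eq_fourierInv hL⟩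

lemma differentiable (hL : IsHalfLap f L) : Differentiable ℝ L := fun x =>
  (hasFDerivAt_of_ofReal_eq_fourierInv hL (integrable_halfLapSymbol f)
    (integrable_norm_mul_halfLapSymbol f) x).differentiableAt

lemma exists_bound_fderiv (hL : IsHalfLap f L) : ∃ C, ∀ x, ‖fderiv ℝ L x‖ ≤ C :=
  ⟨_, norm_fderiv_le_of_ofReal_eq_fourierInv hL (integrable_halfLapSymbol f)
    (integrable_norm_mul_halfLapSymbol f)⟩

lemma integrable_mul (hL : IsHalfLap f L) (h : 𝓢(V, ℝ)) : Integrable fun x => h x * L x :=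
  let ⟨_, hC⟩ := hL.exists_bound
  h.integrable.mul_bdd hL.differentiable.continuous.aestronglyMeasurable (ae_of_all _ hC)

lemma integrable_mul_fderiv (hL : IsHalfLap f L) (h : 𝓢(V, ℝ)) (v : V) :
    Integrable fun x => h x * fderiv ℝ L x v := by
  obtain ⟨C, hC⟩ := hL.exists_bound_fderiv
  refine h.integrable.mul_bdd (c := C * ‖v‖)
    (measurable_fderiv_apply_const ℝ L v).aestronglyMeasurable (ae_of_all _ fun x => ?_)
  calc ‖fderiv ℝ L x v‖ ≤ ‖fderiv ℝ L x‖ * ‖v‖ := (fderiv ℝ L x).le_opNorm v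
    _ ≤ C * ‖v‖ := by gcongr; exact hC x

lemma integral_mul_fderiv (hL : IsHalfLap f L) (h : 𝓢(V, ℝ)) (v : V) :
    ∫ x, h x * fderiv ℝ L x v = -∫ x, ∂_{v} h x * L x :=
  integral_mul_fderiv_eq_neg_fderiv_mul_of_integrable (hL.integrable_mul (∂_{v} h))
    (hL.integrable_mul_fderiv h v) (hL.integrable_mul h)
    (fun _ _ => h.differentiableAt) (fun x _ => hL.differentiable x)

lemma ofReal_integral_mul (hL : IsHalfLap f L) (g : 𝓢(V, ℝ)) :
    ((∫ x, g x * L x : ℝ) : ℂ)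
      = ∫ η, halfLapSymbol f η * 𝓕 (fun x => (g x : ℂ)) (-η) := by
  have hg : Integrable fun x => (g x : ℂ) := g.integrable.ofReal
  rw [← integral_complex_ofReal]
  simp_rw [Complex.ofReal_mul, hL _, mul_comm (g _ : ℂ),
    integral_fourierInv_mul_eq_of_integrable hg (integrable_halfLapSymbol f),
    Real.fourierInv_eq_fourier_neg]

lemma integral_mul_comm {Lf Lg : V → ℝ} (hf : IsHalfLap f Lf) (hg : IsHalfLap g Lg) :
    ∫ x, g x * Lf x = ∫ x, f x * Lg x := by
  rw [← Complex.ofReal_inj, hf.ofReal_integral_mul, hg.ofReal_integral_mul,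
    ← integral_neg_eq_self]
  congr 1 with η
  simp only [halfLapSymbol, neg_neg, norm_neg]
  ring

end IsHalfLap

end HalfLaplacian

section Plane

local notation "e₀" => (EuclideanSpace.single 0 (1 : ℝ) : E2)
local notation "e₁" => (EuclideanSpace.single 1 (1 : ℝ) : E2)

lemma ft_two_pi_smul (g : E2 → ℝ) (η : E2) : ft g ((2 * π) • η) = 𝓕 (fun x => (g x : ℂ)) η := by
  rw [ft, Real.fourier_eq']
  congr 1 with x
  rw [real_inner_smul_right, smul_eq_mul]
  push_cast
  ring_nf

lemma IsFourierHalfLap.isHalfLap {g L : E2 → ℝ} (hL : IsFourierHalfLap g L) : IsHalfLap g L := by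
  intro x
  -- substitute `ξ = 2π η`: the Jacobian `(2π)²` cancels the prefactor `((2π)²)⁻¹`
  have hscale := Measure.integral_comp_smul (volume : Measure E2)
    (fun ξ : E2 => Complex.exp (Complex.I * ((⟪x, ξ⟫ : ℝ) : ℂ)) * (‖ξ‖ : ℂ) * ft g ξ) (2 * π)
  rw [finrank_euclideanSpace_fin, abs_inv, abs_of_pos (by positivity)] at hscale
  rw [hL x, ← Complex.real_smul, ← hscale, Real.fourierInv_eq']
  congr 1 with η
  rw [ft_two_pi_smul, halfLapSymbol, real_inner_smul_right, norm_smul,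
    Real.norm_of_nonneg (by positivity), real_inner_comm, smul_eq_mul]
  ring_nf

def gradDotGradPerp (f g : E2 → ℝ) (x : E2) : ℝ := ∑ i, pd i f x * gradPerp g x i

def SchwartzMap.gradDotGradPerp (f g : 𝓢(E2, ℝ)) : 𝓢(E2, ℝ) :=
  SchwartzMap.pairing (.mul ℝ ℝ) (∂_{e₁} f) (∂_{e₀} g)
    - SchwartzMap.pairing (.mul ℝ ℝ) (∂_{e₀} f) (∂_{e₁} g)

lemma SchwartzMap.coe_gradDotGradPerp (f g : 𝓢(E2, ℝ)) :
    ⇑(f.gradDotGradPerp g) = _root_.gradDotGradPerp f g := by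
  ext x
  simp only [SchwartzMap.gradDotGradPerp, _root_.gradDotGradPerp, sub_apply, pairing_apply_apply,
    ContinuousLinearMap.mul_apply', lineDerivOp_apply_eq_fderiv, pd, gradPerp, Fin.sum_univ_two,
    Matrix.cons_val_zero, Matrix.cons_val_one, Matrix.cons_val_fin_one]
  ring

lemma mul_gradDotGradPerp (ψ φ : 𝓢(E2, ℝ)) (L : E2 → ℝ) (x : E2) :
    ψ x * gradDotGradPerp φ L x
      = SchwartzMap.pairing (.mul ℝ ℝ) ψ (∂_{e₁} φ) x * fderiv ℝ L x e₀
        - SchwartzMap.pairing (.mul ℝ ℝ) ψ (∂_{e₀} φ) x * fderiv ℝ L x e₁ := by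
  simp only [gradDotGradPerp, SchwartzMap.pairing_apply_apply, ContinuousLinearMap.mul_apply',
    SchwartzMap.lineDerivOp_apply_eq_fderiv, pd, gradPerp, Fin.sum_univ_two, Matrix.cons_val_zero,
    Matrix.cons_val_one, Matrix.cons_val_fin_one]
  ring

namespace IsHalfLap

variable {f : 𝓢(E2, ℝ)} {L : E2 → ℝ}

lemma integrable_mul_gradDotGradPerp (hL : IsHalfLap f L) (ψ φ : 𝓢(E2, ℝ)) :
    Integrable fun x => ψ x * gradDotGradPerp φ L x := by
  simp_rw [mul_gradDotGradPerp]
  exact (hL.integrable_mul_fderiv _ _).sub (hL.integrable_mul_fderiv _ _)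

lemma integral_mul_gradDotGradPerp (hL : IsHalfLap f L) (ψ φ : 𝓢(E2, ℝ)) :
    ∫ x, ψ x * gradDotGradPerp φ L x = -∫ x, gradDotGradPerp φ ψ x * L x := by
  simp_rw [mul_gradDotGradPerp]
  rw [integral_sub (hL.integrable_mul_fderiv _ _) (hL.integrable_mul_fderiv _ _),
    hL.integral_mul_fderiv, hL.integral_mul_fderiv, neg_sub_neg,
    ← integral_sub (hL.integrable_mul _) (hL.integrable_mul _), ← integral_neg]
  congr 1 with x
  rw [← sub_mul, SchwartzMap.lineDerivOp_mul_lineDerivOp_sub]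
  simp only [gradDotGradPerp, SchwartzMap.lineDerivOp_apply_eq_fderiv, pd, gradPerp,
    Fin.sum_univ_two, Matrix.cons_val_zero, Matrix.cons_val_one, Matrix.cons_val_fin_one]
  ring

end IsHalfLap

end Plane

theorem stmt9_general (ψ φ : SchwartzMap E2 ℝ) (Λψ Λw : E2 → ℝ)
    (hΛψ : IsFourierHalfLap (⇑ψ) Λψ)
    (hΛw : IsFourierHalfLap
      (fun x => ∑ i : Fin 2, pd i (⇑φ) x * gradPerp (⇑ψ) x i) Λw) :
    2 * ∫ x : E2, Λψ x * (∑ i : Fin 2, gradPerp (⇑ψ) x i * pd i (⇑φ) x)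
      = ∫ x : E2, ψ x * (Λw x - ∑ i : Fin 2, pd i (⇑φ) x * gradPerp Λψ x i) := by
  set w := φ.gradDotGradPerp ψ
  have hψ : IsHalfLap ψ Λψ := hΛψ.isHalfLap
  have hw : IsHalfLap w Λw := by
    rw [SchwartzMap.coe_gradDotGradPerp]
    exact hΛw.isHalfLap
  have hlhs : ∀ x, Λψ x * ∑ i, gradPerp ψ x i * pd i φ x = w x * Λψ x := fun x => by
    simp only [w, SchwartzMap.coe_gradDotGradPerp, gradDotGradPerp, mul_comm (gradPerp _ _ _),
      mul_comm (Λψ x)]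
  have hrhs : ∫ x, ψ x * (Λw x - gradDotGradPerp φ Λψ x) = 2 * ∫ x, w x * Λψ x := by
    simp_rw [mul_sub]
    rw [integral_sub (hw.integrable_mul ψ) (hψ.integrable_mul_gradDotGradPerp ψ φ),
      hψ.integral_mul_gradDotGradPerp, hw.integral_mul_comm hψ, ← SchwartzMap.coe_gradDotGradPerp]
    ring
  simp_rw [hlhs]
  exact hrhs.symm

/-- Resnick'\''s commutator representation of the SQG nonlinear flux: for Schwartz
`ψ, φ` and `u = ∇^⊥ψ`,
`2∫ (Λψ)(u·∇φ) dx = ∫ ψ [Λ(∇φ·u) − ∇φ·(∇^⊥Λψ)] dx`,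
i.e. `(θ R^⊥θ, ∇φ) = ½∫ (Λ⁻¹θ)[Λ,∇φ]·R^⊥θ dx` with `θ = Λψ`. -/
theorem stmt9 (ψ φ : SchwartzMap E2 ℝ) (Λψ Λw : E2 → ℝ)
    (hΛψsmooth : ContDiff ℝ (⊤ : ℕ∞) Λψ)
    (hΛψ : IsFourierHalfLap (⇑ψ) Λψ)
    (hΛw : IsFourierHalfLap
      (fun x => ∑ i : Fin 2, pd i (⇑φ) x * gradPerp (⇑ψ) x i) Λw) :
    2 * ∫ x : E2, Λψ x * (∑ i : Fin 2, gradPerp (⇑ψ) x i * pd i (⇑φ) x)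
      = ∫ x : E2, ψ x * (Λw x - ∑ i : Fin 2, pd i (⇑φ) x * gradPerp Λψ x i) :=
  stmt9_general ψ φ Λψ Λw hΛψ hΛw
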